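/- Consider the forced Lur'e system ẋ(t) = Ax(t) + B₁f(C₁x(t)) + B₂w(t) under (A1) and (A2) with time-independent f, and assume hypothesis (H1) holds. Let 1 ≤ s < ∞. If (w_a, x_a) and (w_b, x_b) are trajectories of the system such that w_a − w_b ∈ L^s(ℝ₊, ℝ^{m₂}), then x_a(t) − x_b(t) → 0 as t → ∞. -/

import Mathlib

/-!
The difference `z = x_a - x_b` of two trajectories satisfies `ż = A z + N + b`, where
`|N| ≤ B₁ Δ C₁ |z|` componentwise and `b = B₂ (w_a - w_b)`. Since `A` is Metzler, `1 + h A` is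
entrywise nonnegative for small `h > 0`, so one Euler step shows that the weighted `ℓ¹` norm
`V = pᵀ|z|` decays at rate `ξ` by (H1), up to the forcing. Gronwall's inequality gives
`V t ≤ e^{-ξ (t - r)} V r + K ∫_r^t ‖w_a - w_b‖` on every window. The `L^s` hypothesis makes
these window integrals vanish as `r → ∞`, and windows of length `log 2 / ξ` halve `V` up to an
arbitrarily small error, so `V → 0`.
-/

open Matrix MeasureTheory Filter Topology

noncomputable section

/-- A square real matrix is Metzler if all its off-diagonal entries are nonnegative. -/
def IsMetzler {n : ℕ} (A : Matrix (Fin n) (Fin n) ℝ) : Prop :=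
  ∀ i j, i ≠ j → 0 ≤ A i j

/-- A pair `(w, x)` is a trajectory of the forced Lur'e system
`ẋ = Ax + B₁ f(C₁ x) + B₂ w` (time-independent nonlinearity) on `ℝ₊`. -/
def IsTrajectory {n m₁ m₂ p₁ : ℕ}
    (A : Matrix (Fin n) (Fin n) ℝ) (B₁ : Matrix (Fin n) (Fin m₁) ℝ)
    (B₂ : Matrix (Fin n) (Fin m₂) ℝ) (C₁ : Matrix (Fin p₁) (Fin n) ℝ)
    (f : (Fin p₁ → ℝ) → Fin m₁ → ℝ)
    (w : ℝ → Fin m₂ → ℝ) (x : ℝ → Fin n → ℝ) : Prop :=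
  ContinuousOn x (Set.Ici 0) ∧
  ∀ t : ℝ, 0 ≤ t →
    x t = x 0 + ∫ s in (0:ℝ)..t,
      (A.mulVec (x s) + B₁.mulVec (f (C₁.mulVec (x s))) + B₂.mulVec (w s))

open Set Real

theorem continuous_pi_abs {ι : Type*} : Continuous fun v : ι → ℝ => |v| :=
  continuous_pi fun i => (continuous_apply i).abs

section NonnegMatrix

variable {ι κ : Type*} [Fintype κ]

theorem mulVec_mono_of_nonneg {M : Matrix ι κ ℝ} (hM : ∀ i j, 0 ≤ M i j) {u v : κ → ℝ}
    (huv : u ≤ v) : M *ᵥ u ≤ M *ᵥ v :=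
  fun i => dotProduct_le_dotProduct_of_nonneg_left huv (hM i)

theorem abs_mulVec_le_map_abs (M : Matrix ι κ ℝ) (v : κ → ℝ) :
    |M *ᵥ v| ≤ M.map (abs : ℝ → ℝ) *ᵥ |v| := fun i => by
  simpa only [Pi.abs_apply, mulVec, dotProduct, map_apply, abs_mul]
    using Finset.abs_sum_le_sum_abs (fun j => M i j * v j) Finset.univ

theorem abs_mulVec_le_of_nonneg {M : Matrix ι κ ℝ} (hM : ∀ i j, 0 ≤ M i j) (v : κ → ℝ) :
    |M *ᵥ v| ≤ M *ᵥ |v| := by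
  have hMabs : M.map (abs : ℝ → ℝ) = M := by ext i j; exact abs_of_nonneg (hM i j)
  simpa only [hMabs] using abs_mulVec_le_map_abs M v

theorem mul_apply_nonneg {μ : Type*} [Fintype μ] {M : Matrix ι κ ℝ} {N : Matrix κ μ ℝ}
    (hM : ∀ i j, 0 ≤ M i j) (hN : ∀ i j, 0 ≤ N i j) (i : ι) (j : μ) : 0 ≤ (M * N) i j :=
  Finset.sum_nonneg fun k _ => mul_nonneg (hM i k) (hN k j)

theorem dotProduct_abs_le_sum_mul_norm {q : κ → ℝ} (hq : 0 ≤ q) (v : κ → ℝ) :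
    q ⬝ᵥ |v| ≤ (∑ i, q i) * ‖v‖ := by
  rw [Finset.sum_mul]
  exact Finset.sum_le_sum fun i _ => mul_le_mul_of_nonneg_left (norm_le_pi_norm v i) (hq i)

theorem abs_mulVec_add_le_of_abs_le {M : Matrix κ κ ℝ} (hM : ∀ i j, 0 ≤ M i j) (A : Matrix κ κ ℝ)
    {y W N : κ → ℝ} (hN : |N| ≤ M *ᵥ |y + W|) :
    |A *ᵥ W + N| ≤ M *ᵥ |y| + (A.map (abs : ℝ → ℝ) + M) *ᵥ |W| :=
  calc |A *ᵥ W + N| ≤ A.map (abs : ℝ → ℝ) *ᵥ |W| + M *ᵥ (|y| + |W|) :=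
        (abs_add_le _ _).trans (add_le_add (abs_mulVec_le_map_abs A W)
          (hN.trans (mulVec_mono_of_nonneg hM (abs_add_le y W))))
    _ = M *ᵥ |y| + (A.map (abs : ℝ → ℝ) + M) *ᵥ |W| := by
        rw [mulVec_add, add_mulVec]; abel

theorem tendsto_zero_of_tendsto_dotProduct_abs {α ι : Type*} [Fintype ι] {l : Filter α}
    {p : ι → ℝ} (hp : ∀ i, 0 < p i) {z : α → ι → ℝ}
    (hz : Tendsto (fun t => p ⬝ᵥ |z t|) l (𝓝 0)) : Tendsto z l (𝓝 0) := by
  refine tendsto_pi_nhds.2 fun i => squeeze_zero_norm (fun t => ?_) (by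
    simpa using hz.const_mul (p i)⁻¹)
  rw [Real.norm_eq_abs, ← div_eq_inv_mul, le_div_iff₀' (hp i)]
  exact Finset.single_le_sum (f := fun j => p j * |z t j|)
    (fun j _ => mul_nonneg (hp j).le (abs_nonneg _)) (Finset.mem_univ i)

end NonnegMatrix

theorem MeasureTheory.LocallyIntegrableOn.intervalIntegrable_of_mem_Ici {E : Type*}
    [NormedAddCommGroup E] {f : ℝ → E} {a : ℝ} (hf : LocallyIntegrableOn f (Ici a))
    {b c : ℝ} (hb : a ≤ b) (hc : a ≤ c) : IntervalIntegrable f volume b c :=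
  (hf.integrableOn_compact_subset (fun _ hx => le_trans (le_min hb hc) hx.1)
    isCompact_uIcc).intervalIntegrable

theorem MeasureTheory.LocallyIntegrableOn.mulVec {ι κ : Type*} [Fintype ι] [Fintype κ]
    {s : Set ℝ} {w : ℝ → κ → ℝ} (hw : LocallyIntegrableOn w s) (B : Matrix ι κ ℝ) :
    LocallyIntegrableOn (fun t => B *ᵥ w t) s := fun t ht =>
  let ⟨U, hU, hint⟩ := hw t ht
  ⟨U, hU, (LinearMap.toContinuousLinearMap (mulVecLin B)).integrable_comp hint⟩

theorem hasDerivWithinAt_sub_intervalIntegral {E : Type*} [NormedAddCommGroup E]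
    [NormedSpace ℝ E] [CompleteSpace E] {z G b : ℝ → E} (hG : ContinuousOn G (Ici 0))
    (hb : LocallyIntegrableOn b (Ici 0))
    (heq : ∀ r t, 0 ≤ r → r ≤ t → z t = z r + ∫ σ in r..t, (G σ + b σ))
    {r τ : ℝ} (hr : 0 ≤ r) (hτ : r ≤ τ) :
    HasDerivWithinAt (fun t => z t - ∫ σ in r..t, b σ) (G τ) (Ici τ) τ := by
  have hτ0 : 0 ≤ τ := hr.trans hτ
  have hGi := hG.locallyIntegrableOn (μ := volume) measurableSet_Ici
  have hz : ∀ t, r ≤ t → z t - ∫ σ in r..t, b σ = z r + ∫ σ in r..t, G σ := fun t ht => by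
    rw [heq r t hr ht, intervalIntegral.integral_add
      (hGi.intervalIntegrable_of_mem_Ici hr (hr.trans ht))
      (hb.intervalIntegrable_of_mem_Ici hr (hr.trans ht))]
    abel
  have hIoi : Ioi τ ⊆ Ici 0 := fun _ h => hτ0.trans (le_of_lt h)
  have hderiv : HasDerivWithinAt (fun t => ∫ σ in r..t, G σ) (G τ) (Ici τ) τ :=
    intervalIntegral.integral_hasDerivWithinAt_right (hGi.intervalIntegrable_of_mem_Ici hr hτ0)
      ((hG.stronglyMeasurableAtFilter_nhdsWithin measurableSet_Ici τ).filter_mono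
        (nhdsWithin_mono _ hIoi))
      ((hG τ hτ0).mono hIoi)
  exact (hderiv.const_add (z r)).congr (fun t ht => hz t (hτ.trans ht)) (hz τ hτ)

theorem le_add_rpow_one_sub_mul_rpow {x θ s : ℝ} (hx : 0 ≤ x) (hθ : 0 < θ) (hs : 1 ≤ s) :
    x ≤ θ + θ ^ (1 - s) * x ^ s := by
  rcases le_or_gt x θ with hxθ | hθx
  · have := mul_nonneg (rpow_nonneg hθ.le (1 - s)) (rpow_nonneg hx s)
    linarith
  · calc x = x ^ (1 - s) * x ^ s := by rw [← rpow_add (hθ.trans hθx)]; simp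
      _ ≤ θ ^ (1 - s) * x ^ s :=
          mul_le_mul_of_nonneg_right (rpow_le_rpow_of_nonpos hθ hθx.le (by linarith))
            (rpow_nonneg hx s)
      _ ≤ θ + θ ^ (1 - s) * x ^ s := le_add_of_nonneg_left hθ.le

theorem tendsto_intervalIntegral_add_const_of_integrableOn {E : Type*} [NormedAddCommGroup E]
    [NormedSpace ℝ E] {g : ℝ → E} {a : ℝ} (hg : IntegrableOn g (Ioi a)) (T : ℝ) :
    Tendsto (fun r => ∫ σ in r..r + T, g σ) atTop (𝓝 0) := by
  have hlim := intervalIntegral_tendsto_integral_Ioi a hg tendsto_id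
  have hint : ∀ c, a ≤ c → IntervalIntegrable g volume a c := fun c hc =>
    (intervalIntegrable_iff_integrableOn_Ioc_of_le hc).2 (hg.mono_set Ioc_subset_Ioi_self)
  refine ((hlim.comp (tendsto_atTop_add_const_right _ T tendsto_id)).sub hlim).congr' ?_
    |>.trans (by rw [sub_self])
  filter_upwards [eventually_ge_atTop (max a (a - T))] with r hr
  exact intervalIntegral.integral_interval_sub_left
    (hint (r + T) (by linarith [le_max_right a (a - T)]))
    (hint _ (le_of_max_le_left hr))

theorem tendsto_intervalIntegral_add_const_of_integrableOn_rpow {u : ℝ → ℝ} {s T : ℝ}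
    (hs : 1 ≤ s) (hT : 0 ≤ T) (hu0 : ∀ t, 0 ≤ u t) (hu : LocallyIntegrableOn u (Ici 0))
    (hus : IntegrableOn (fun t => u t ^ s) (Ici 0)) :
    Tendsto (fun r => ∫ σ in r..r + T, u σ) atTop (𝓝 0) := by
  have htail := tendsto_intervalIntegral_add_const_of_integrableOn
    (hus.mono_set Ioi_subset_Ici_self) T
  have hbound : ∀ θ > 0, ∀ r ≥ 0,
      ∫ σ in r..r + T, u σ ≤ θ * T + θ ^ (1 - s) * ∫ σ in r..r + T, u σ ^ s := by
    intro θ hθ r hr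
    have husi : IntervalIntegrable (fun t => u t ^ s) volume r (r + T) :=
      hus.locallyIntegrableOn.intervalIntegrable_of_mem_Ici hr (by linarith)
    calc ∫ σ in r..r + T, u σ ≤ ∫ σ in r..r + T, (θ + θ ^ (1 - s) * u σ ^ s) :=
          intervalIntegral.integral_mono_on (by linarith)
            (hu.intervalIntegrable_of_mem_Ici hr (by linarith))
            (intervalIntegrable_const.add (husi.const_mul _))
            fun σ _ => le_add_rpow_one_sub_mul_rpow (hu0 σ) hθ hs
      _ = θ * T + θ ^ (1 - s) * ∫ σ in r..r + T, u σ ^ s := by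
          rw [intervalIntegral.integral_add intervalIntegrable_const (husi.const_mul _),
            intervalIntegral.integral_const, intervalIntegral.integral_const_mul, smul_eq_mul]
          ring
  rw [tendsto_order]
  refine ⟨fun a ha => Eventually.of_forall fun r =>
    ha.trans_le (intervalIntegral.integral_nonneg (by linarith) fun σ _ => hu0 σ), fun a ha => ?_⟩
  set θ := a / (T + 1)
  have hθ : 0 < θ := by positivity
  have hθT : θ * T < a := by
    calc θ * T < θ * (T + 1) := by linarith
      _ = a := div_mul_cancel₀ a (by linarith)
  have hlim : Tendsto (fun r => θ * T + θ ^ (1 - s) * ∫ σ in r..r + T, u σ ^ s) atTop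
      (𝓝 (θ * T)) := by
    simpa using (htail.const_mul (θ ^ (1 - s))).const_add (θ * T)
  filter_upwards [hlim.eventually_lt_const hθT, eventually_ge_atTop 0] with r h1 h0
  exact (hbound θ hθ r h0).trans_lt h1

theorem le_exp_mul_add_of_eventually_sub_le {f : ℝ → ℝ} {a b ξ ε : ℝ} (hξ : 0 < ξ)
    (hε : 0 ≤ ε) (hab : a ≤ b) (hf : ContinuousOn f (Icc a b))
    (hslope : ∀ x ∈ Ico a b, ∀ η > 0, ∀ᶠ y in 𝓝[>] x, f y - f x ≤ (y - x) * (-ξ * f x + ε + η)) :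
    f b ≤ exp (-ξ * (b - a)) * f a + ε / ξ := by
  have hslope' : ∀ x ∈ Ico a b, ∀ c, -ξ * f x + ε < c →
      ∃ᶠ y in 𝓝[>] x, (y - x)⁻¹ * (f y - f x) < c := fun x hx c hc => by
    have hη : 0 < (c - (-ξ * f x + ε)) / 2 := by linarith
    refine ((hslope x hx _ hη).and self_mem_nhdsWithin).mono (fun y ⟨hy, hxy⟩ => ?_) |>.frequently
    rw [inv_mul_lt_iff₀ (sub_pos.2 hxy)]
    nlinarith [sub_pos.2 hxy]
  have hgr := le_gronwallBound_of_liminf_deriv_right_le hf hslope' le_rfl (fun x _ => le_rfl) b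
    (right_mem_Icc.2 hab)
  rw [gronwallBound_of_K_ne_0 (neg_ne_zero.2 hξ.ne')] at hgr
  calc f b ≤ f a * exp (-ξ * (b - a)) + ε / -ξ * (exp (-ξ * (b - a)) - 1) := hgr
    _ = exp (-ξ * (b - a)) * f a + ε / ξ * (1 - exp (-ξ * (b - a))) := by rw [div_neg]; ring
    _ ≤ exp (-ξ * (b - a)) * f a + ε / ξ := by
        nlinarith [mul_nonneg (div_nonneg hε hξ.le) (exp_pos (-ξ * (b - a))).le]

theorem eventually_le_four_mul_of_le_half_add {V : ℝ → ℝ} {R T ε : ℝ} (hT : 0 < T) (hε : 0 < ε)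
    (hV : ∀ t, 0 ≤ V t) (hwin : ∀ t ∈ Icc R (R + T), V t ≤ V R + ε)
    (hhalf : ∀ r ≥ R, V (r + T) ≤ V r / 2 + ε) : ∀ᶠ t in atTop, V t ≤ 4 * ε := by
  have hstep : ∀ k : ℕ, ∀ t ∈ Icc (R + k * T) (R + (k + 1) * T), V t ≤ V R / 2 ^ k + 3 * ε := by
    intro k
    induction k with
    | zero =>
      intro t ht
      simp only [CharP.cast_eq_zero, zero_mul, add_zero, zero_add, one_mul] at ht
      linarith [hwin t ht, pow_zero (2 : ℝ), div_one (V R)]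
    | succ k ih =>
      intro t ht
      push_cast at ht
      have hkT : 0 ≤ (k : ℝ) * T := by positivity
      have hr : t - T ∈ Icc (R + k * T) (R + (k + 1) * T) :=
        ⟨by linarith [ht.1], by linarith [ht.2]⟩
      have h := hhalf (t - T) (by linarith [hr.1])
      rw [sub_add_cancel] at h
      rw [pow_succ, ← div_div]
      linarith [ih _ hr]
  obtain ⟨k₀, hk₀⟩ : ∃ k : ℕ, V R / 2 ^ k ≤ ε :=
    ((tendsto_const_nhds.div_atTop (tendsto_pow_atTop_atTop_of_one_lt one_lt_two)).eventually
      (ge_mem_nhds hε)).exists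
  filter_upwards [eventually_ge_atTop (R + k₀ * T)] with t ht
  set k := ⌊(t - R) / T⌋₊
  have hd : 0 ≤ (t - R) / T := div_nonneg (by nlinarith [Nat.cast_nonneg (α := ℝ) k₀]) hT.le
  have hk : k₀ ≤ k := Nat.le_floor (by rw [le_div_iff₀ hT]; linarith)
  have htk : t ∈ Icc (R + k * T) (R + (k + 1) * T) :=
    ⟨by linarith [(le_div_iff₀ hT).1 (Nat.floor_le hd)],
      by linarith [(div_lt_iff₀ hT).1 (Nat.lt_floor_add_one ((t - R) / T))]⟩
  calc V t ≤ V R / 2 ^ k + 3 * ε := hstep k t htk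
    _ ≤ V R / 2 ^ k₀ + 3 * ε := by gcongr; exacts [hV R, one_le_two]
    _ ≤ 4 * ε := by linarith

theorem tendsto_zero_of_le_exp_mul_add_integral {V u : ℝ → ℝ} {ξ K : ℝ} (hξ : 0 < ξ)
    (hK : 0 ≤ K) (hV : ∀ t, 0 ≤ V t) (hu0 : ∀ t, 0 ≤ u t) (hu : LocallyIntegrableOn u (Ici 0))
    (hwin : ∀ T, 0 ≤ T → Tendsto (fun r => ∫ σ in r..r + T, u σ) atTop (𝓝 0))
    (hest : ∀ r t, 0 ≤ r → r ≤ t →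
      V t ≤ exp (-ξ * (t - r)) * V r + K * ∫ σ in r..t, u σ) :
    Tendsto V atTop (𝓝 0) := by
  set T := log 2 / ξ
  have hT : 0 < T := div_pos (log_pos one_lt_two) hξ
  rw [tendsto_order]
  refine ⟨fun a ha => Eventually.of_forall fun t => ha.trans_le (hV t), fun a ha => ?_⟩
  set ε := a / 5
  have hε : 0 < ε := by positivity
  obtain ⟨R, hR⟩ := eventually_atTop.1 ((((hwin T hT.le).const_mul K).eventually_le_const
    (by rw [mul_zero]; positivity : K * 0 < ε)).and (eventually_ge_atTop 0))
  have hwindow : ∀ r ≥ R, ∀ t ∈ Icc r (r + T), V t ≤ exp (-ξ * (t - r)) * V r + ε := by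
    intro r hr t ht
    have hint : ∫ σ in r..t, u σ ≤ ∫ σ in r..r + T, u σ :=
      intervalIntegral.integral_mono_interval le_rfl ht.1 ht.2 (ae_of_all _ hu0)
        (hu.intervalIntegrable_of_mem_Ici (hR r hr).2 (by linarith [(hR r hr).2]))
    linarith [hest r t (hR r hr).2 ht.1, mul_le_mul_of_nonneg_left hint hK, (hR r hr).1]
  refine (eventually_le_four_mul_of_le_half_add (R := R) hT hε hV (fun t ht => ?_) (fun r hr => ?_)).mono
    fun t h => h.trans_lt (by simp only [ε]; linarith)
  · have hexp : exp (-ξ * (t - R)) ≤ 1 := exp_le_one_iff.2 (by nlinarith [ht.1])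
    nlinarith [hwindow R le_rfl t ht, mul_le_mul_of_nonneg_right hexp (hV R)]
  · have hexpT : exp (-ξ * T) = 2⁻¹ := by
      rw [show -ξ * T = -log 2 by simp only [T]; field_simp, Real.exp_neg, exp_log two_pos]
    have h := hwindow r hr (r + T) ⟨by linarith, le_rfl⟩
    rwa [add_sub_cancel_left, hexpT, inv_mul_eq_div] at h

section Comparison

variable {n : ℕ} {A M : Matrix (Fin n) (Fin n) ℝ} {p : Fin n → ℝ} {ξ : ℝ}

theorem IsMetzler.one_add_smul_apply_nonneg (hA : IsMetzler A) {h : ℝ} (h0 : 0 ≤ h)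
    (hdiag : ∀ i, 0 ≤ 1 + h * A i i) (i j : Fin n) : 0 ≤ (1 + h • A) i j := by
  rcases eq_or_ne i j with rfl | hij
  · simpa using hdiag i
  · simpa [one_apply_ne hij] using mul_nonneg h0 (hA i j hij)

theorem IsMetzler.dotProduct_abs_add_smul_le (hA : IsMetzler A)
    (hp : 0 ≤ p) (hH : ∀ j, (p ᵥ* (A + M)) j ≤ -(ξ * p j)) {h : ℝ} (h0 : 0 ≤ h)
    (hdiag : ∀ i, 0 ≤ 1 + h * A i i) {y g e : Fin n → ℝ} (hg : |g| ≤ M *ᵥ |y| + e) :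
    p ⬝ᵥ |y + h • (A *ᵥ y + g)| ≤ (1 - h * ξ) * (p ⬝ᵥ |y|) + h * (p ⬝ᵥ e) := by
  have habs : |y + h • (A *ᵥ y + g)| ≤ |y| + h • ((A + M) *ᵥ |y| + e) :=
    calc |y + h • (A *ᵥ y + g)| = |(1 + h • A) *ᵥ y + h • g| := by
          rw [add_mulVec, one_mulVec, smul_mulVec, smul_add, add_assoc]
      _ ≤ (1 + h • A) *ᵥ |y| + h • |g| := by
          refine (abs_add_le _ _).trans (add_le_add ?_ ?_)
          · exact abs_mulVec_le_of_nonneg (hA.one_add_smul_apply_nonneg h0 hdiag) y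
          · intro i; simp [abs_mul, abs_of_nonneg h0]
      _ ≤ (1 + h • A) *ᵥ |y| + h • (M *ᵥ |y| + e) := by gcongr
      _ = |y| + h • ((A + M) *ᵥ |y| + e) := by
          rw [add_mulVec, add_mulVec, one_mulVec, smul_mulVec]; module
  have hdecay : (p ᵥ* (A + M)) ⬝ᵥ |y| ≤ -ξ * (p ⬝ᵥ |y|) := by
    rw [← smul_eq_mul, ← smul_dotProduct]
    exact dotProduct_le_dotProduct_of_nonneg_right (fun j => by simpa using hH j) (abs_nonneg y)
  calc p ⬝ᵥ |y + h • (A *ᵥ y + g)| ≤ p ⬝ᵥ (|y| + h • ((A + M) *ᵥ |y| + e)) :=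
        dotProduct_le_dotProduct_of_nonneg_left habs hp
    _ = p ⬝ᵥ |y| + h * ((p ᵥ* (A + M)) ⬝ᵥ |y|) + h * (p ⬝ᵥ e) := by
        rw [dotProduct_add, dotProduct_smul, dotProduct_add, dotProduct_mulVec, smul_eq_mul]
        ring
    _ ≤ (1 - h * ξ) * (p ⬝ᵥ |y|) + h * (p ⬝ᵥ e) := by nlinarith

theorem IsMetzler.eventually_dotProduct_abs_sub_le (hA : IsMetzler A) (hp : 0 ≤ p)
    (hH : ∀ j, (p ᵥ* (A + M)) j ≤ -(ξ * p j)) {y : ℝ → Fin n → ℝ} {τ : ℝ} {g e : Fin n → ℝ}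
    (hy : HasDerivWithinAt y (A *ᵥ y τ + g) (Ici τ) τ) (hg : |g| ≤ M *ᵥ |y τ| + e)
    {η : ℝ} (hη : 0 < η) :
    ∀ᶠ τ' in 𝓝[>] τ,
      p ⬝ᵥ |y τ'| - p ⬝ᵥ |y τ| ≤ (τ' - τ) * (-ξ * (p ⬝ᵥ |y τ|) + p ⬝ᵥ e + η) := by
  have hsum : 0 ≤ ∑ i, p i := Finset.sum_nonneg fun i _ => hp i
  set c := ∑ i, p i + 1
  have hc : 0 < c := by positivity
  set d := A *ᵥ y τ + g
  have hrem : ∀ᶠ τ' in 𝓝[>] τ, ‖y τ' - (y τ + (τ' - τ) • d)‖ ≤ η / c * ‖τ' - τ‖ := by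
    have := (hasDerivWithinAt_iff_isLittleO.1 hy).def (div_pos hη hc)
    simp only [sub_sub] at this
    exact nhdsWithin_mono _ Ioi_subset_Ici_self this
  have hdiag : ∀ᶠ τ' in 𝓝[>] τ, ∀ i, 0 ≤ 1 + (τ' - τ) * A i i := by
    refine nhdsWithin_le_nhds (eventually_all.2 fun i => ?_)
    have hlim : Tendsto (fun τ' => 1 + (τ' - τ) * A i i) (𝓝 τ) (𝓝 1) := by
      simpa using (((continuous_sub_right τ).mul continuous_const).const_add 1).tendsto τ
    exact (hlim.eventually_const_lt one_pos).mono fun _ h => h.le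
  filter_upwards [hrem, hdiag, self_mem_nhdsWithin] with τ' hrem hdiag hτ'
  set h := τ' - τ
  have hh : 0 < h := sub_pos.2 hτ'
  have hstep := hA.dotProduct_abs_add_smul_le hp hH hh.le hdiag hg
  have hremp : p ⬝ᵥ |y τ' - (y τ + h • d)| ≤ η * h := by
    calc p ⬝ᵥ |y τ' - (y τ + h • d)| ≤ (∑ i, p i) * (η / c * h) := by
          refine (dotProduct_abs_le_sum_mul_norm hp _).trans (mul_le_mul_of_nonneg_left ?_ hsum)
          rwa [Real.norm_of_nonneg hh.le] at hrem
      _ ≤ c * (η / c * h) := by gcongr; linarith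
      _ = η * h := by field_simp
  have hsub : p ⬝ᵥ |y τ'| ≤ p ⬝ᵥ |y τ + h • d| + p ⬝ᵥ |y τ' - (y τ + h • d)| := by
    rw [← dotProduct_add]
    refine dotProduct_le_dotProduct_of_nonneg_left ?_ hp
    simpa only [add_sub_cancel] using abs_add_le (y τ + h • d) (y τ' - (y τ + h • d))
  nlinarith

theorem IsMetzler.dotProduct_abs_le_of_hasDerivWithinAt (hA : IsMetzler A) (hp : 0 ≤ p)
    (hH : ∀ j, (p ᵥ* (A + M)) j ≤ -(ξ * p j)) (hξ : 0 < ξ) {y g e : ℝ → Fin n → ℝ}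
    {r t ε : ℝ} (hrt : r ≤ t) (hε : 0 ≤ ε) (hyc : ContinuousOn y (Icc r t))
    (hy : ∀ τ ∈ Ico r t, HasDerivWithinAt y (A *ᵥ y τ + g τ) (Ici τ) τ)
    (hg : ∀ τ ∈ Ico r t, |g τ| ≤ M *ᵥ |y τ| + e τ) (he : ∀ τ ∈ Ico r t, p ⬝ᵥ e τ ≤ ε) :
    p ⬝ᵥ |y t| ≤ exp (-ξ * (t - r)) * (p ⬝ᵥ |y r|) + ε / ξ := by
  refine le_exp_mul_add_of_eventually_sub_le (f := fun τ => p ⬝ᵥ |y τ|) hξ hε hrt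
    ((continuous_const.dotProduct continuous_pi_abs).comp_continuousOn hyc) fun τ hτ η hη => ?_
  filter_upwards [hA.eventually_dotProduct_abs_sub_le hp hH (hy τ hτ) (hg τ hτ) hη,
    self_mem_nhdsWithin] with τ' h hτ'
  have : 0 < τ' - τ := sub_pos.2 hτ'
  nlinarith [he τ hτ]

theorem IsMetzler.exists_dotProduct_abs_le_of_eq_add_integral (hA : IsMetzler A)
    (hM : ∀ i j, 0 ≤ M i j) (hp : 0 ≤ p) (hH : ∀ j, (p ᵥ* (A + M)) j ≤ -(ξ * p j))
    (hξ : 0 < ξ) {z N b : ℝ → Fin n → ℝ} {u : ℝ → ℝ}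
    (hz : ContinuousOn z (Ici 0)) (hN : ContinuousOn N (Ici 0))
    (hNz : ∀ t, |N t| ≤ M *ᵥ |z t|) (hb : LocallyIntegrableOn b (Ici 0))
    (hu : LocallyIntegrableOn u (Ici 0)) (hbu : ∀ t, ‖b t‖ ≤ u t)
    (heq : ∀ r t, 0 ≤ r → r ≤ t → z t = z r + ∫ σ in r..t, (A *ᵥ z σ + N σ + b σ)) :
    ∃ K, 0 ≤ K ∧ ∀ r t, 0 ≤ r → r ≤ t →
      p ⬝ᵥ |z t| ≤ exp (-ξ * (t - r)) * (p ⬝ᵥ |z r|) + K * ∫ σ in r..t, u σ := by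
  set R := A.map (abs : ℝ → ℝ) + M
  have hR : ∀ i j, 0 ≤ R i j := fun i j => add_nonneg (abs_nonneg _) (hM i j)
  have hpR : 0 ≤ p ᵥ* R := fun j =>
    show 0 ≤ ∑ i, p i * R i j from Finset.sum_nonneg fun i _ => mul_nonneg (hp i) (hR i j)
  set κ := ∑ j, (p ᵥ* R) j
  have hκ : 0 ≤ κ := Finset.sum_nonneg fun j _ => hpR j
  have hsum : 0 ≤ ∑ i, p i := Finset.sum_nonneg fun i _ => hp i
  refine ⟨κ / ξ + ∑ i, p i, by positivity, fun r t hr hrt => ?_⟩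
  have hG : ContinuousOn (fun σ => A *ᵥ z σ + N σ) (Ici 0) :=
    ((continuous_const.matrix_mulVec continuous_id).comp_continuousOn hz).add hN
  -- `z` need not be differentiable since `b` is only integrable, but `y = z - W` is.
  set W : ℝ → Fin n → ℝ := fun τ => ∫ σ in r..τ, b σ
  set y : ℝ → Fin n → ℝ := fun τ => z τ - W τ
  set β := ∫ σ in r..t, u σ
  have hβ : 0 ≤ β := intervalIntegral.integral_nonneg hrt fun σ _ => (norm_nonneg _).trans (hbu σ)
  have hW : ∀ τ ∈ Icc r t, ‖W τ‖ ≤ β := fun τ hτ =>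
    (intervalIntegral.norm_integral_le_of_norm_le hτ.1 (ae_of_all _ fun σ _ => hbu σ)
      (hu.intervalIntegrable_of_mem_Ici hr (hr.trans hτ.1))).trans
    (intervalIntegral.integral_mono_interval le_rfl hτ.1 hτ.2
      (ae_of_all _ fun σ => (norm_nonneg _).trans (hbu σ))
      (hu.intervalIntegrable_of_mem_Ici hr (hr.trans hrt)))
  have hy : ∀ τ ∈ Ico r t, HasDerivWithinAt y (A *ᵥ y τ + (A *ᵥ W τ + N τ)) (Ici τ) τ := by
    intro τ hτ
    have hyτ : A *ᵥ y τ + (A *ᵥ W τ + N τ) = A *ᵥ z τ + N τ := by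
      simp only [y, mulVec_sub]
      abel
    rw [hyτ]
    exact hasDerivWithinAt_sub_intervalIntegral hG hb heq hr hτ.1
  have hg : ∀ τ, |A *ᵥ W τ + N τ| ≤ M *ᵥ |y τ| + R *ᵥ |W τ| := fun τ =>
    abs_mulVec_add_le_of_abs_le hM A (by simpa only [y, sub_add_cancel] using hNz τ)
  have he : ∀ τ ∈ Icc r t, p ⬝ᵥ (R *ᵥ |W τ|) ≤ κ * β := fun τ hτ => by
    rw [dotProduct_mulVec]
    exact (dotProduct_abs_le_sum_mul_norm hpR _).trans (mul_le_mul_of_nonneg_left (hW τ hτ) hκ)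
  have hWc : ContinuousOn W (Icc r t) := by
    have := intervalIntegral.continuousOn_primitive_interval (a := r) (b := t)
      (hb.integrableOn_compact_subset (fun _ h => hr.trans (uIcc_of_le hrt ▸ h).1) isCompact_uIcc)
    rwa [uIcc_of_le hrt] at this
  have hyt := hA.dotProduct_abs_le_of_hasDerivWithinAt (y := y) hp hH hξ hrt (mul_nonneg hκ hβ)
    ((hz.mono fun _ h => hr.trans h.1).sub hWc) hy (fun τ _ => hg τ)
    (fun τ hτ => he τ (Ico_subset_Icc_self hτ))
  have hyr : y r = z r := by simp [y, W]
  have hzt : p ⬝ᵥ |z t| ≤ p ⬝ᵥ |y t| + p ⬝ᵥ |W t| := by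
    rw [← dotProduct_add]
    refine dotProduct_le_dotProduct_of_nonneg_left ?_ hp
    simpa only [y, sub_add_cancel] using abs_add_le (y t) (W t)
  have hWt := (dotProduct_abs_le_sum_mul_norm hp (W t)).trans
    (mul_le_mul_of_nonneg_left (hW t ⟨hrt, le_rfl⟩) hsum)
  rw [hyr] at hyt
  calc p ⬝ᵥ |z t| ≤ exp (-ξ * (t - r)) * (p ⬝ᵥ |z r|) + κ * β / ξ + (∑ i, p i) * β := by
        linarith
    _ = exp (-ξ * (t - r)) * (p ⬝ᵥ |z r|) + (κ / ξ + ∑ i, p i) * β := by ring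

end Comparison

section Trajectory

variable {n m₁ m₂ p₁ : ℕ} {A : Matrix (Fin n) (Fin n) ℝ} {B₁ : Matrix (Fin n) (Fin m₁) ℝ}
  {B₂ : Matrix (Fin n) (Fin m₂) ℝ} {C₁ : Matrix (Fin p₁) (Fin n) ℝ}
  {f : (Fin p₁ → ℝ) → Fin m₁ → ℝ} {Δ : Matrix (Fin m₁) (Fin p₁) ℝ}

theorem continuous_of_abs_sub_le_mulVec_abs_sub
    (hf : ∀ ζ₁ ζ₂ : Fin p₁ → ℝ, ∀ i, |f ζ₁ i - f ζ₂ i| ≤ (Δ *ᵥ |ζ₁ - ζ₂|) i) : Continuous f := by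
  refine continuous_pi fun i => continuous_iff_continuousAt.2 fun ζ₀ =>
    tendsto_iff_dist_tendsto_zero.2 (squeeze_zero (fun _ => dist_nonneg) (fun ζ => hf ζ ζ₀ i) ?_)
  have hc : Continuous fun ζ => (Δ *ᵥ |ζ - ζ₀|) i := (continuous_apply i).comp
    (continuous_const.matrix_mulVec (continuous_pi_abs.comp (continuous_sub_right ζ₀)))
  simpa using hc.tendsto ζ₀

theorem abs_mulVec_sub_le_mul_mulVec_abs (hB₁ : ∀ i j, 0 ≤ B₁ i j) (hΔ : ∀ i j, 0 ≤ Δ i j)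
    (hC₁ : ∀ i j, 0 ≤ C₁ i j)
    (hf : ∀ ζ₁ ζ₂ : Fin p₁ → ℝ, ∀ i, |f ζ₁ i - f ζ₂ i| ≤ (Δ *ᵥ |ζ₁ - ζ₂|) i) (x y : Fin n → ℝ) :
    |B₁ *ᵥ (f (C₁ *ᵥ x) - f (C₁ *ᵥ y))| ≤ (B₁ * Δ * C₁) *ᵥ |x - y| := by
  rw [← mulVec_mulVec, ← mulVec_mulVec]
  refine (abs_mulVec_le_of_nonneg hB₁ _).trans (mulVec_mono_of_nonneg hB₁ fun i => ?_)
  refine (hf _ _ i).trans (mulVec_mono_of_nonneg hΔ ?_ i)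
  rw [← mulVec_sub]
  exact abs_mulVec_le_of_nonneg hC₁ _

variable {w : ℝ → Fin m₂ → ℝ} {x : ℝ → Fin n → ℝ}

theorem IsTrajectory.locallyIntegrableOn (hf : Continuous f)
    (hx : IsTrajectory A B₁ B₂ C₁ f w x) (hw : LocallyIntegrableOn w (Ici 0)) :
    LocallyIntegrableOn (fun t => A *ᵥ x t + B₁ *ᵥ f (C₁ *ᵥ x t) + B₂ *ᵥ w t) (Ici 0) := by
  refine .add (ContinuousOn.locallyIntegrableOn ?_ measurableSet_Ici) (hw.mulVec B₂)
  exact ((continuous_const.matrix_mulVec continuous_id).comp_continuousOn hx.1).add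
    ((continuous_const.matrix_mulVec
      (hf.comp (continuous_const.matrix_mulVec continuous_id))).comp_continuousOn hx.1)

theorem IsTrajectory.eq_add_integral (hf : Continuous f) (hx : IsTrajectory A B₁ B₂ C₁ f w x)
    (hw : LocallyIntegrableOn w (Ici 0)) {r t : ℝ} (hr : 0 ≤ r) (hrt : r ≤ t) :
    x t = x r + ∫ σ in r..t, (A *ᵥ x σ + B₁ *ᵥ f (C₁ *ᵥ x σ) + B₂ *ᵥ w σ) := by
  have hint := hx.locallyIntegrableOn hf hw
  rw [hx.2 t (hr.trans hrt), hx.2 r hr, add_assoc, intervalIntegral.integral_add_adjacent_intervals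
    (hint.intervalIntegrable_of_mem_Ici le_rfl hr)
    (hint.intervalIntegrable_of_mem_Ici hr (hr.trans hrt))]

theorem IsTrajectory.sub_eq_add_integral (hf : Continuous f) {w_a w_b : ℝ → Fin m₂ → ℝ}
    {x_a x_b : ℝ → Fin n → ℝ}
    (ha : IsTrajectory A B₁ B₂ C₁ f w_a x_a) (hb : IsTrajectory A B₁ B₂ C₁ f w_b x_b)
    (hwa : LocallyIntegrableOn w_a (Ici 0)) (hwb : LocallyIntegrableOn w_b (Ici 0))
    {r t : ℝ} (hr : 0 ≤ r) (hrt : r ≤ t) :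
    x_a t - x_b t = x_a r - x_b r + ∫ σ in r..t, (A *ᵥ (x_a σ - x_b σ) +
      B₁ *ᵥ (f (C₁ *ᵥ x_a σ) - f (C₁ *ᵥ x_b σ)) + B₂ *ᵥ (w_a σ - w_b σ)) := by
  rw [ha.eq_add_integral hf hwa hr hrt, hb.eq_add_integral hf hwb hr hrt, add_sub_add_comm,
    ← intervalIntegral.integral_sub
      ((ha.locallyIntegrableOn hf hwa).intervalIntegrable_of_mem_Ici hr (hr.trans hrt))
      ((hb.locallyIntegrableOn hf hwb).intervalIntegrable_of_mem_Ici hr (hr.trans hrt))]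
  simp only [mulVec_sub]
  congr 2
  funext σ
  abel

end Trajectory

theorem stmt12_general {n m₁ m₂ p₁ : ℕ}
    (A : Matrix (Fin n) (Fin n) ℝ) (B₁ : Matrix (Fin n) (Fin m₁) ℝ)
    (B₂ : Matrix (Fin n) (Fin m₂) ℝ) (C₁ : Matrix (Fin p₁) (Fin n) ℝ)
    -- (A1)
    (hA : IsMetzler A) (hB₁ : ∀ i j, 0 ≤ B₁ i j)
    (hC₁ : ∀ i j, 0 ≤ C₁ i j)
    -- (A2), time-independent
    (f : (Fin p₁ → ℝ) → Fin m₁ → ℝ) (Δ : Matrix (Fin m₁) (Fin p₁) ℝ)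
    (hΔ : ∀ i j, 0 ≤ Δ i j)
    (hf_inc : ∀ ζ₁ ζ₂ : Fin p₁ → ℝ,
        ∀ i, |f ζ₁ i - f ζ₂ i| ≤ Δ.mulVec (fun j => |ζ₁ j - ζ₂ j|) i)
    -- (H1)
    (ξ : ℝ) (hξ : 0 < ξ) (p : Fin n → ℝ) (hp : ∀ i, 0 < p i)
    (hH1 : ∀ j, vecMul p (A + B₁ * Δ * C₁) j ≤ -(ξ * p j))
    -- two trajectories
    (w_a w_b : ℝ → Fin m₂ → ℝ) (x_a x_b : ℝ → Fin n → ℝ)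
    (hwa : LocallyIntegrableOn w_a (Set.Ici 0) volume)
    (hwb : LocallyIntegrableOn w_b (Set.Ici 0) volume)
    (ha : IsTrajectory A B₁ B₂ C₁ f w_a x_a)
    (hb : IsTrajectory A B₁ B₂ C₁ f w_b x_b)
    -- w_a − w_b ∈ L^s(ℝ₊, ℝ^{m₂})
    (s : ℝ) (hs : 1 ≤ s)
    (hLs : IntegrableOn (fun t => ‖w_a t - w_b t‖ ^ s) (Set.Ici 0) volume) :
    Tendsto (fun t => x_a t - x_b t) atTop (𝓝 0) := by
  have hfc := continuous_of_abs_sub_le_mulVec_abs_sub hf_inc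
  have hF : Continuous fun v => f (C₁ *ᵥ v) :=
    hfc.comp (continuous_const.matrix_mulVec continuous_id)
  have hδw : LocallyIntegrableOn (fun t => w_a t - w_b t) (Ici 0) := hwa.sub hwb
  set L := LinearMap.toContinuousLinearMap (mulVecLin B₂)
  obtain ⟨K, hK, hest⟩ := hA.exists_dotProduct_abs_le_of_eq_add_integral
    (mul_apply_nonneg (mul_apply_nonneg hB₁ hΔ) hC₁) (fun i => (hp i).le) hH1 hξ
    (u := fun t => ‖L‖ * ‖w_a t - w_b t‖) (ha.1.sub hb.1)
    ((continuous_const.matrix_mulVec continuous_id).comp_continuousOn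
      ((hF.comp_continuousOn ha.1).sub (hF.comp_continuousOn hb.1)))
    (fun t => abs_mulVec_sub_le_mul_mulVec_abs hB₁ hΔ hC₁ hf_inc _ _) (hδw.mulVec B₂)
    (hδw.norm.smul ‖L‖) (fun t => L.le_opNorm _)
    (fun r t hr hrt => ha.sub_eq_add_integral hfc hb hwa hwb hr hrt)
  refine tendsto_zero_of_tendsto_dotProduct_abs hp (tendsto_zero_of_le_exp_mul_add_integral
    (u := fun t => ‖L‖ * ‖w_a t - w_b t‖) hξ hK
    (fun t => dotProduct_nonneg_of_nonneg (fun i => (hp i).le) (abs_nonneg _))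
    (fun t => by positivity) (hδw.norm.smul ‖L‖) (fun T hT => ?_) hest)
  simpa only [intervalIntegral.integral_const_mul, mul_zero] using
    (tendsto_intervalIntegral_add_const_of_integrableOn_rpow hs hT (fun t => norm_nonneg _)
      hδw.norm hLs).const_mul ‖L‖

/-- if the difference of forcing terms is in `L^s`, `1 ≤ s < ∞`, then the
difference of the corresponding state trajectories converges to zero. -/
theorem stmt12 {n m₁ m₂ p₁ : ℕ}
    (A : Matrix (Fin n) (Fin n) ℝ) (B₁ : Matrix (Fin n) (Fin m₁) ℝ)
    (B₂ : Matrix (Fin n) (Fin m₂) ℝ) (C₁ : Matrix (Fin p₁) (Fin n) ℝ)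
    -- (A1)
    (hA : IsMetzler A) (hB₁ : ∀ i j, 0 ≤ B₁ i j) (hB₂ : ∀ i j, 0 ≤ B₂ i j)
    (hC₁ : ∀ i j, 0 ≤ C₁ i j)
    -- (A2), time-independent
    (f : (Fin p₁ → ℝ) → Fin m₁ → ℝ) (Δ : Matrix (Fin m₁) (Fin p₁) ℝ)
    (hΔ : ∀ i j, 0 ≤ Δ i j)
    (hf_inc : ∀ ζ₁ ζ₂ : Fin p₁ → ℝ,
        ∀ i, |f ζ₁ i - f ζ₂ i| ≤ Δ.mulVec (fun j => |ζ₁ j - ζ₂ j|) i)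
    -- (H1)
    (ξ : ℝ) (hξ : 0 < ξ) (p : Fin n → ℝ) (hp : ∀ i, 0 < p i)
    (hH1 : ∀ j, vecMul p (A + B₁ * Δ * C₁) j ≤ -(ξ * p j))
    -- two trajectories
    (w_a w_b : ℝ → Fin m₂ → ℝ) (x_a x_b : ℝ → Fin n → ℝ)
    (hwa : LocallyIntegrableOn w_a (Set.Ici 0) volume)
    (hwb : LocallyIntegrableOn w_b (Set.Ici 0) volume)
    (ha : IsTrajectory A B₁ B₂ C₁ f w_a x_a)
    (hb : IsTrajectory A B₁ B₂ C₁ f w_b x_b)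
    -- w_a − w_b ∈ L^s(ℝ₊, ℝ^{m₂})
    (s : ℝ) (hs : 1 ≤ s)
    (hmeas : AEStronglyMeasurable (fun t => w_a t - w_b t) (volume.restrict (Set.Ici 0)))
    (hLs : IntegrableOn (fun t => ‖w_a t - w_b t‖ ^ s) (Set.Ici 0) volume) :
    Tendsto (fun t => x_a t - x_b t) atTop (𝓝 0) :=
  stmt12_general A B₁ B₂ C₁ hA hB₁ hC₁ f Δ hΔ hf_inc ξ hξ p hp hH1 w_a w_b x_a x_b hwa hwb ha hb s
    hs hLs
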